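/- arXiv:2605.15597 — 4 statements merged into one kernel-verified Lean document; each statement's English description precedes it below -/
import Mathlib

section
/- Conflict-aware noisy-oracle greedy guarantee (Lemma 1): under the stated noisy-oracle and conflict-aware greedy assumptions, the set V_K produced after K greedy steps satisfies f(V_K) ≥ (1 − 1/e) · f(V*) − Σ_{t=1}^{K} (2·ε_t + 2·λ·γ_t), where γ_t = L_t(v_t*) is the conflict value of an oracle-best candidate at step t. -/
/-- Auxiliary: monotone + submodular implies the marginal-sum bound. -/
theorem aux_submod_sum
    {V : Type*} [DecidableEq V]
    (f : Finset V → ℝ)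
    (hmono : ∀ A B : Finset V, A ⊆ B → f A ≤ f B)
    (hsub : ∀ A B : Finset V, A ⊆ B → ∀ v : V, v ∉ B →
      f (insert v B) - f B ≤ f (insert v A) - f A) :
    ∀ (B A : Finset V), f (A ∪ B) ≤ f A + ∑ v ∈ B, (f (insert v A) - f A) := by
  intro B
  induction B using Finset.induction_on with
  | empty => intro A; simp
  | @insert a s ha ih =>
    intro A
    have hrw : A ∪ insert a s = insert a (A ∪ s) := by
      ext x; simp [or_comm, or_left_comm, or_assoc]
    rw [hrw, Finset.sum_insert ha]
    have ih' := ih A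
    by_cases hmem : a ∈ A ∪ s
    · have : insert a (A ∪ s) = A ∪ s := Finset.insert_eq_self.2 hmem
      rw [this]
      have hnn : 0 ≤ f (insert a A) - f A := by
        have := hmono A (insert a A) (Finset.subset_insert a A); linarith
      linarith
    · have h1 := hsub A (A ∪ s) Finset.subset_union_left a hmem
      linarith

/-- Lemma 1 (Conflict-aware noisy-oracle greedy guarantee): under the stated
noisy-oracle and conflict-aware greedy assumptions, the set `V_K` produced
after `K` greedy steps satisfies
`f(V_K) ≥ (1 − 1/e) · f(V*) − Σ_{t=1}^{K} (2·ε_t + 2·λ·γ_t)`,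
where `γ_t = L_t(v_t*)` is the conflict value of an oracle-best candidate. -/
theorem stmt_0
    {V : Type*} [Fintype V] [DecidableEq V]
    (f : Finset V → ℝ)
    (hmono : ∀ A B : Finset V, A ⊆ B → f A ≤ f B)
    (hsub : ∀ A B : Finset V, A ⊆ B → ∀ v : V, v ∉ B →
      f (insert v B) - f B ≤ f (insert v A) - f A)
    (hnorm : f ∅ = 0)
    (K : ℕ) (hK : 1 ≤ K)
    (Vopt : Finset V) (hopt : Vopt.card ≤ K)
    (u : ℕ → V) (Vt : ℕ → Finset V)
    (hV0 : Vt 0 = ∅)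
    (hVstep : ∀ t ∈ Finset.Icc 1 K, Vt t = insert (u t) (Vt (t - 1)))
    (G L : ℕ → V → ℝ) (ε : ℕ → ℝ) (η lam : ℝ)
    (hLnn : ∀ t ∈ Finset.Icc 1 K, ∀ v : V, 0 ≤ L t v)
    (hεnn : ∀ t ∈ Finset.Icc 1 K, 0 ≤ ε t)
    (hηnn : 0 ≤ η)
    (hproxy : ∀ t ∈ Finset.Icc 1 K, ∀ v : V,
      |G t v - (f (insert v (Vt (t - 1))) - f (Vt (t - 1)))| ≤ ε t + η * L t v)
    (hlam : η ≤ lam)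
    (hgreedy : ∀ t ∈ Finset.Icc 1 K, ∀ v : V,
      G t v - lam * L t v ≤ G t (u t) - lam * L t (u t))
    (vstar : ℕ → V)
    (hstar : ∀ t ∈ Finset.Icc 1 K, ∀ v : V,
      f (insert v (Vt (t - 1))) - f (Vt (t - 1)) ≤
        f (insert (vstar t) (Vt (t - 1))) - f (Vt (t - 1))) :
    f (Vt K) ≥ (1 - (Real.exp 1)⁻¹) * f Vopt
      - ∑ t ∈ Finset.Icc 1 K, (2 * ε t + 2 * lam * L t (vstar t)) := by
  have hlamnn : (0:ℝ) ≤ lam := le_trans hηnn hlam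
  set e : ℕ → ℝ := fun t => 2 * ε t + 2 * lam * L t (vstar t) with he
  clear_value e
  have henn : ∀ t ∈ Finset.Icc 1 K, 0 ≤ e t := by
    intro t ht
    have h1 := hεnn t ht
    have h2 := hLnn t ht (vstar t)
    have : 0 ≤ 2 * lam * L t (vstar t) := by positivity
    simp only [he]; linarith
  have hKr : (0:ℝ) < (K : ℝ) := by exact_mod_cast hK.trans_lt' (by norm_num)
  have hKr1 : (1:ℝ) ≤ (K : ℝ) := by exact_mod_cast hK
  set c : ℝ := 1 - ((K : ℝ))⁻¹ with hc
  clear_value c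
  have hKinv1 : ((K:ℝ))⁻¹ ≤ 1 := by
    rw [inv_le_one_iff₀]; right; exact hKr1
  have hKinv0 : (0:ℝ) ≤ ((K:ℝ))⁻¹ := by positivity
  have hc0 : 0 ≤ c := by rw [hc]; linarith
  have hc1 : c ≤ 1 := by rw [hc]; linarith
  -- key per-step inequality
  have key : ∀ t ∈ Finset.Icc 1 K,
      f Vopt - f (Vt t) ≤ c * (f Vopt - f (Vt (t-1))) + e t := by
    intro t ht
    set S := Vt (t-1) with hS
    clear_value S
    set Δu := f (insert (u t) S) - f S with hΔu
    clear_value Δu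
    set Δs := f (insert (vstar t) S) - f S with hΔs
    clear_value Δs
    have hVt : f (Vt t) = f S + Δu := by rw [hVstep t ht, hΔu, hS]; ring
    -- step 1: Δu ≥ Δs - e t
    have hstep1 : Δs - e t ≤ Δu := by
      have hpu := abs_le.1 (hproxy t ht (u t))
      have hps := abs_le.1 (hproxy t ht (vstar t))
      have hg := hgreedy t ht (vstar t)
      have hLu := hLnn t ht (u t)
      have hLs := hLnn t ht (vstar t)
      have h1 : (η - lam) * L t (u t) ≤ 0 := mul_nonpos_of_nonpos_of_nonneg (by linarith) hLu
      have h2 : η * L t (vstar t) ≤ lam * L t (vstar t) := mul_le_mul_of_nonneg_right hlam hLs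
      have hmain : Δs - (2 * ε t + 2 * lam * L t (vstar t)) ≤ Δu := by
        rw [hΔu, hΔs, hS]
        nlinarith [hpu.1, hpu.2, hps.1, hps.2]
      simpa only [he] using hmain
    -- step 2: f Vopt - f S ≤ K * Δs
    have hstep2 : f Vopt - f S ≤ (K:ℝ) * Δs := by
      have hA : f Vopt ≤ f (S ∪ Vopt) := hmono _ _ Finset.subset_union_right
      have hB := aux_submod_sum f hmono hsub Vopt S
      have hC : ∑ v ∈ Vopt, (f (insert v S) - f S) ≤ (Vopt.card : ℝ) * Δs := by
        calc ∑ v ∈ Vopt, (f (insert v S) - f S)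
            ≤ ∑ _v ∈ Vopt, Δs :=
              Finset.sum_le_sum (fun v _ => by rw [hΔs, hS]; exact hstar t ht v)
          _ = (Vopt.card : ℝ) * Δs := by rw [Finset.sum_const, nsmul_eq_mul]
      have hΔsnn : 0 ≤ Δs := by
        have := hmono S (insert (vstar t) S) (Finset.subset_insert _ _)
        rw [hΔs]; linarith
      have hcard : (Vopt.card : ℝ) * Δs ≤ (K:ℝ) * Δs :=
        mul_le_mul_of_nonneg_right (by exact_mod_cast hopt) hΔsnn
      linarith
    -- combine
    have hinv : ((K:ℝ))⁻¹ * (f Vopt - f S) ≤ Δs := by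
      have := mul_le_mul_of_nonneg_left hstep2 (inv_nonneg.2 hKr.le)
      rwa [inv_mul_cancel_left₀ hKr.ne'] at this
    rw [hVt, hc]
    have hexp : (1-((K:ℝ))⁻¹)*(f Vopt - f S) = (f Vopt - f S) - ((K:ℝ))⁻¹*(f Vopt - f S) := by
      ring
    linarith
  -- unroll the recurrence
  have unroll : ∀ n, n ≤ K →
      f Vopt - f (Vt n) ≤ c ^ n * f Vopt + ∑ t ∈ Finset.Icc 1 n, e t := by
    intro n
    induction n with
    | zero => intro _; simp [hV0, hnorm]
    | succ m ih =>
      intro hmK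
      have hm : m ≤ K := Nat.le_of_succ_le hmK
      have ih' := ih hm
      have hmem : m + 1 ∈ Finset.Icc 1 K := Finset.mem_Icc.2 ⟨Nat.succ_le_succ (Nat.zero_le m), hmK⟩
      have hkey := key (m+1) hmem
      simp only [Nat.add_sub_cancel] at hkey
      have hsumnn : 0 ≤ ∑ t ∈ Finset.Icc 1 m, e t := by
        apply Finset.sum_nonneg
        intro t ht
        exact henn t (Finset.mem_Icc.2 ⟨(Finset.mem_Icc.1 ht).1, le_trans (Finset.mem_Icc.1 ht).2 hm⟩)
      have hmul : c * (f Vopt - f (Vt m)) ≤ c * (c ^ m * f Vopt + ∑ t ∈ Finset.Icc 1 m, e t) :=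
        mul_le_mul_of_nonneg_left ih' hc0
      have hsum : ∑ t ∈ Finset.Icc 1 (m+1), e t = (∑ t ∈ Finset.Icc 1 m, e t) + e (m+1) :=
        Finset.sum_Icc_succ_top (Nat.succ_le_succ (Nat.zero_le m)) e
      rw [hsum, pow_succ]
      nlinarith
  have hfinal := unroll K le_rfl
  have hfopt : 0 ≤ f Vopt := by
    have := hmono ∅ Vopt (Finset.empty_subset _); linarith [hnorm ▸ this]
  have hpow : c ^ K ≤ (Real.exp 1)⁻¹ := by
    have h1 : c ≤ Real.exp (-((K:ℝ))⁻¹) := by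
      have := Real.add_one_le_exp (-((K:ℝ))⁻¹)
      simp only [hc]; linarith
    have h2 : c ^ K ≤ Real.exp (-((K:ℝ))⁻¹) ^ K := pow_le_pow_left₀ hc0 h1 K
    have h3 : Real.exp (-((K:ℝ))⁻¹) ^ K = Real.exp ((K:ℝ) * -((K:ℝ))⁻¹) :=
      (Real.exp_nat_mul _ K).symm
    have h4 : (K:ℝ) * -((K:ℝ))⁻¹ = -1 := by
      field_simp
    rw [h3, h4, Real.exp_neg] at h2
    exact h2
  have hpowf : c ^ K * f Vopt ≤ (Real.exp 1)⁻¹ * f Vopt :=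
    mul_le_mul_of_nonneg_right hpow hfopt
  linarith
end

section
/- Per-step inequality of the conflict-aware greedy proof: at every step t, the candidate u_t selected by maximizing the conflict-aware score s_t(v) = G_t(v) − λ·L_t(v) satisfies Δ(u_t | V_{t-1}) ≥ Δ(v_t* | V_{t-1}) − 2·ε_t − 2·λ·γ_t, where v_t* is a true-marginal-maximizing candidate and γ_t = L_t(v_t*). -/
/-- Per-step inequality of the conflict-aware greedy proof: at a step with
partial selection `S = V_{t-1}`, the candidate `u` selected by maximizing the
conflict-aware score `s(v) = G(v) − λ·L(v)` satisfies
`Δ(u | S) ≥ Δ(v* | S) − 2·ε − 2·λ·γ` where `v*` maximizes the true marginal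
and `γ = L(v*)`. -/
theorem stmt_1
    {V : Type*} [Fintype V] [DecidableEq V]
    (f : Finset V → ℝ) (S : Finset V)
    (G L : V → ℝ) (ε η lam : ℝ)
    (hLnn : ∀ v : V, 0 ≤ L v)
    (hεnn : 0 ≤ ε)
    (hηnn : 0 ≤ η)
    (hproxy : ∀ v : V, |G v - (f (insert v S) - f S)| ≤ ε + η * L v)
    (hlam : η ≤ lam)
    (u : V)
    (hgreedy : ∀ v : V, G v - lam * L v ≤ G u - lam * L u)
    (vstar : V)
    (hstar : ∀ v : V, f (insert v S) - f S ≤ f (insert vstar S) - f S) :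
    f (insert u S) - f S ≥
      (f (insert vstar S) - f S) - 2 * ε - 2 * lam * L vstar := by
  have hu := abs_le.1 (hproxy u)
  have hv := abs_le.1 (hproxy vstar)
  have h1 := hgreedy vstar
  have h2 := hLnn u
  have h3 := hLnn vstar
  nlinarith [mul_nonneg (sub_nonneg.2 hlam) h2, mul_nonneg (sub_nonneg.2 hlam) h3]
end

section
/- Telescoping recurrence of the conflict-aware greedy proof: under the stated noisy-oracle and conflict-aware greedy assumptions, for every step t = 1, …, K the residual gap satisfies f(V*) − f(V_t) ≤ (1 − 1/K) · (f(V*) − f(V_{t-1})) + 2·ε_t + 2·λ·γ_t. -/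
/-!
Submodularity bounds the gap `f V* - f S` by the sum of the marginals of the elements of `V*`
over `S`, hence by `K` times the best marginal. The noisy oracle can make the greedy pick lose
at most `2 ε_t + 2 λ γ_t` against the best marginal, because `λ ≥ η` lets the penalty absorb the
conflict-dependent part of the oracle error; subtracting the pick's gain from the gap gives the
recurrence.
-/

open Finset

section MarginalGain

variable {V : Type*} [DecidableEq V]

def marginalGain (f : Finset V → ℝ) (S : Finset V) (v : V) : ℝ :=
  f (insert v S) - f S

lemma marginalGain_nonneg {f : Finset V → ℝ} (hmono : Monotone f) (S : Finset V) (v : V) :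
    0 ≤ marginalGain f S v :=
  sub_nonneg.2 (hmono (subset_insert v S))

lemma marginalGain_eq_zero_of_mem (f : Finset V → ℝ) {S : Finset V} {v : V} (hv : v ∈ S) :
    marginalGain f S v = 0 := by
  rw [marginalGain, insert_eq_of_mem hv, sub_self]

variable {f : Finset V → ℝ}
  (hsub : ∀ A B : Finset V, A ⊆ B → ∀ v : V, v ∉ B →
    marginalGain f B v ≤ marginalGain f A v)
include hsub

lemma sub_le_sum_marginalGain (S T : Finset V) :
    f (S ∪ T) - f S ≤ ∑ v ∈ T, marginalGain f S v := by
  induction T using Finset.induction_on with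
  | empty => simp
  | @insert a T ha ih =>
    rw [union_insert, sum_insert ha]
    by_cases haS : a ∈ S
    · rw [insert_eq_of_mem (mem_union_left T haS), marginalGain_eq_zero_of_mem f haS]
      linarith
    · have hstep := hsub S (S ∪ T) subset_union_left a (by simp [haS, ha])
      unfold marginalGain at hstep ih ⊢
      linarith

lemma sub_le_card_mul_marginalGain (hmono : Monotone f) {S T : Finset V} {w : V} {K : ℕ}
    (hT : T.card ≤ K) (hw : ∀ v ∈ T, marginalGain f S v ≤ marginalGain f S w) :
    f T - f S ≤ K * marginalGain f S w :=
  calc f T - f S ≤ f (S ∪ T) - f S := by gcongr; exact hmono subset_union_right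
    _ ≤ ∑ v ∈ T, marginalGain f S v := sub_le_sum_marginalGain hsub S T
    _ ≤ T.card * marginalGain f S w := by
      simpa using sum_le_sum hw
    _ ≤ K * marginalGain f S w := by
      gcongr
      exact marginalGain_nonneg hmono S w

end MarginalGain

lemma le_add_of_isMax_penalized {V : Type*} {Δ G L : V → ℝ} {ε η lam : ℝ} {u : V}
    (hL : ∀ v, 0 ≤ L v) (hG : ∀ v, |G v - Δ v| ≤ ε + η * L v) (hlam : η ≤ lam)
    (hu : ∀ v, G v - lam * L v ≤ G u - lam * L u) (w : V) :
    Δ w ≤ Δ u + 2 * ε + 2 * lam * L w := by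
  have hGu := (abs_le.1 (hG u)).2
  have hGw := (abs_le.1 (hG w)).1
  linarith [hu w, mul_le_mul_of_nonneg_right hlam (hL u), mul_le_mul_of_nonneg_right hlam (hL w)]

theorem stmt_3_general
    {V : Type*} [DecidableEq V]
    (f : Finset V → ℝ)
    (hmono : ∀ A B : Finset V, A ⊆ B → f A ≤ f B)
    (hsub : ∀ A B : Finset V, A ⊆ B → ∀ v : V, v ∉ B →
      f (insert v B) - f B ≤ f (insert v A) - f A)
    (K : ℕ)
    (Vopt : Finset V) (hopt : Vopt.card ≤ K)
    (u : ℕ → V) (Vt : ℕ → Finset V)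
    (hVstep : ∀ t ∈ Finset.Icc 1 K, Vt t = insert (u t) (Vt (t - 1)))
    (G L : ℕ → V → ℝ) (ε : ℕ → ℝ) (η lam : ℝ)
    (hLnn : ∀ t ∈ Finset.Icc 1 K, ∀ v : V, 0 ≤ L t v)
    (hproxy : ∀ t ∈ Finset.Icc 1 K, ∀ v : V,
      |G t v - (f (insert v (Vt (t - 1))) - f (Vt (t - 1)))| ≤ ε t + η * L t v)
    (hlam : η ≤ lam)
    (hgreedy : ∀ t ∈ Finset.Icc 1 K, ∀ v : V,
      G t v - lam * L t v ≤ G t (u t) - lam * L t (u t))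
    (vstar : ℕ → V)
    (hstar : ∀ t ∈ Finset.Icc 1 K, ∀ v : V,
      f (insert v (Vt (t - 1))) - f (Vt (t - 1)) ≤
        f (insert (vstar t) (Vt (t - 1))) - f (Vt (t - 1))) :
    ∀ t ∈ Finset.Icc 1 K,
      f Vopt - f (Vt t) ≤
        (1 - 1 / (K : ℝ)) * (f Vopt - f (Vt (t - 1)))
          + 2 * ε t + 2 * lam * L t (vstar t) := by
  intro t ht
  have hK : (0 : ℝ) < K := by exact_mod_cast (mem_Icc.1 ht).1.trans (mem_Icc.1 ht).2
  have hgap : f Vopt - f (Vt (t - 1)) ≤ K * marginalGain f (Vt (t - 1)) (vstar t) :=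
    sub_le_card_mul_marginalGain hsub (fun A B h => hmono A B h) hopt
      (fun v _ => hstar t ht v)
  have hpick := le_add_of_isMax_penalized (hLnn t ht) (hproxy t ht) hlam (hgreedy t ht) (vstar t)
  have hgap_div := (div_le_iff₀' hK).2 hgap
  unfold marginalGain at hgap_div
  rw [hVstep t ht, one_sub_mul, one_div_mul_eq_div]
  linarith

/-- Telescoping recurrence of the conflict-aware greedy proof: under the
stated noisy-oracle and conflict-aware greedy assumptions, for every step
`t = 1, …, K` the residual gap satisfies
`f(V*) − f(V_t) ≤ (1 − 1/K) · (f(V*) − f(V_{t-1})) + 2·ε_t + 2·λ·γ_t`. -/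
theorem stmt_3
    {V : Type*} [Fintype V] [DecidableEq V]
    (f : Finset V → ℝ)
    (hmono : ∀ A B : Finset V, A ⊆ B → f A ≤ f B)
    (hsub : ∀ A B : Finset V, A ⊆ B → ∀ v : V, v ∉ B →
      f (insert v B) - f B ≤ f (insert v A) - f A)
    (hnorm : f ∅ = 0)
    (K : ℕ) (hK : 1 ≤ K)
    (Vopt : Finset V) (hopt : Vopt.card ≤ K)
    (u : ℕ → V) (Vt : ℕ → Finset V)
    (hV0 : Vt 0 = ∅)
    (hVstep : ∀ t ∈ Finset.Icc 1 K, Vt t = insert (u t) (Vt (t - 1)))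
    (G L : ℕ → V → ℝ) (ε : ℕ → ℝ) (η lam : ℝ)
    (hLnn : ∀ t ∈ Finset.Icc 1 K, ∀ v : V, 0 ≤ L t v)
    (hεnn : ∀ t ∈ Finset.Icc 1 K, 0 ≤ ε t)
    (hηnn : 0 ≤ η)
    (hproxy : ∀ t ∈ Finset.Icc 1 K, ∀ v : V,
      |G t v - (f (insert v (Vt (t - 1))) - f (Vt (t - 1)))| ≤ ε t + η * L t v)
    (hlam : η ≤ lam)
    (hgreedy : ∀ t ∈ Finset.Icc 1 K, ∀ v : V,
      G t v - lam * L t v ≤ G t (u t) - lam * L t (u t))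
    (vstar : ℕ → V)
    (hstar : ∀ t ∈ Finset.Icc 1 K, ∀ v : V,
      f (insert v (Vt (t - 1))) - f (Vt (t - 1)) ≤
        f (insert (vstar t) (Vt (t - 1))) - f (Vt (t - 1))) :
    ∀ t ∈ Finset.Icc 1 K,
      f Vopt - f (Vt t) ≤
        (1 - 1 / (K : ℝ)) * (f Vopt - f (Vt (t - 1)))
          + 2 * ε t + 2 * lam * L t (vstar t) :=
  stmt_3_general f hmono hsub K Vopt hopt u Vt hVstep G L ε η lam hLnn hproxy hlam hgreedy vstar
    hstar
end

section
/- Tighter telescoped form of Lemma 1: under the stated noisy-oracle and conflict-aware greedy assumptions, the set V_K produced after K greedy steps satisfies f(V_K) ≥ (1 − 1/e) · f(V*) − Σ_{t=1}^{K} (1 − 1/K)^{K−t} · (2·ε_t + 2·λ·γ_t); in particular, since each weight (1 − 1/K)^{K−t} ≤ 1 and each error term 2·ε_t + 2·λ·γ_t ≥ 0, this discounted error sum is at most the undiscounted sum Σ_{t=1}^{K} (2·ε_t + 2·λ·γ_t). -/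
/-!
Write `Δ(v | S) = f (insert v S) - f S`. Submodularity and monotonicity give
`f V* - f S ≤ |V*| · Δ(v* | S) ≤ K · Δ(v* | S)` for a best candidate `v*`, while the proxy
error bound together with `λ ≥ η` shows that the conflict-aware greedy choice loses at most
`2 ε_t + 2 λ γ_t` of marginal gain against `v_t*`. Hence the optimality gap
`g_t = f V* - f V_t` obeys `g_t ≤ (1 - 1/K) g_{t-1} + 2 ε_t + 2 λ γ_t`; unrolling this
recursion from `g_0 = f V*` and using `(1 - 1/K)^K ≤ e⁻¹` gives the bound.
-/

open Finset

section SetFunction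

variable {V : Type*} [DecidableEq V]

def marginal (f : Finset V → ℝ) (S : Finset V) (v : V) : ℝ := f (insert v S) - f S

variable {f : Finset V → ℝ} (hmono : Monotone f)
  (hsub : ∀ A B : Finset V, A ⊆ B → ∀ v : V, v ∉ B → marginal f B v ≤ marginal f A v)
include hmono

theorem marginal_nonneg (S : Finset V) (v : V) : 0 ≤ marginal f S v :=
  sub_nonneg.mpr (hmono (subset_insert v S))

include hsub

theorem le_add_sum_marginal (S T : Finset V) :
    f (S ∪ T) ≤ f S + ∑ v ∈ T, marginal f S v := by
  induction T using Finset.induction_on with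
  | empty => simp
  | @insert a T haT ih =>
    rw [union_insert, sum_insert haT]
    by_cases ha : a ∈ S ∪ T
    · rw [insert_eq_of_mem ha]
      linarith [marginal_nonneg hmono S a]
    · have := hsub S (S ∪ T) subset_union_left a ha
      unfold marginal at this ih ⊢
      linarith

theorem sub_le_card_mul_marginal {S T : Finset V} {w : V}
    (hw : ∀ v, marginal f S v ≤ marginal f S w) :
    f T - f S ≤ #T * marginal f S w := by
  calc f T - f S ≤ f (S ∪ T) - f S := by gcongr; exact hmono subset_union_right
    _ ≤ ∑ v ∈ T, marginal f S v := by linarith [le_add_sum_marginal hmono hsub S T]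
    _ ≤ #T * marginal f S w := by simpa using sum_le_card_nsmul T _ _ fun v _ => hw v

theorem sub_insert_le_one_sub_inv_mul_add {S T : Finset V} {K : ℕ} (hK : 0 < K) (hT : #T ≤ K)
    {u w : V} {e : ℝ} (hw : ∀ v, marginal f S v ≤ marginal f S w)
    (hu : marginal f S w - e ≤ marginal f S u) :
    f T - f (insert u S) ≤ (1 - 1 / (K : ℝ)) * (f T - f S) + e := by
  have hKpos : (0 : ℝ) < K := by exact_mod_cast hK
  have hgap : (f T - f S) / K ≤ marginal f S w := by
    rw [div_le_iff₀ hKpos]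
    calc f T - f S ≤ #T * marginal f S w := sub_le_card_mul_marginal hmono hsub hw
      _ ≤ K * marginal f S w :=
        mul_le_mul_of_nonneg_right (by exact_mod_cast hT) (marginal_nonneg hmono S w)
      _ = marginal f S w * K := mul_comm _ _
  have hexpand : (1 - 1 / (K : ℝ)) * (f T - f S) = (f T - f S) - (f T - f S) / K := by ring
  unfold marginal at hgap hu
  linarith

end SetFunction

theorem sub_le_of_abs_sub_le_of_penalized_le {gu gw du dw Lu Lw ε η lam : ℝ}
    (hu : |gu - du| ≤ ε + η * Lu) (hw : |gw - dw| ≤ ε + η * Lw)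
    (hgreedy : gw - lam * Lw ≤ gu - lam * Lu) (hlam : η ≤ lam)
    (hLu : 0 ≤ Lu) (hLw : 0 ≤ Lw) :
    dw - (2 * ε + 2 * lam * Lw) ≤ du := by
  have := abs_le.mp hu
  have := abs_le.mp hw
  have : η * Lu ≤ lam * Lu := mul_le_mul_of_nonneg_right hlam hLu
  have : η * Lw ≤ lam * Lw := mul_le_mul_of_nonneg_right hlam hLw
  linarith

theorem le_pow_mul_add_sum_of_le_mul_add {a e : ℕ → ℝ} {c : ℝ} (hc : 0 ≤ c) {n : ℕ}
    (h : ∀ t ∈ Icc 1 n, a t ≤ c * a (t - 1) + e t) :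
    a n ≤ c ^ n * a 0 + ∑ t ∈ Icc 1 n, c ^ (n - t) * e t := by
  induction n with
  | zero => simp
  | succ m ih =>
    have ih := ih fun t ht => h t (Icc_subset_Icc_right m.le_succ ht)
    have hstep := h (m + 1) (by simp)
    have hsum : ∑ t ∈ Icc 1 (m + 1), c ^ (m + 1 - t) * e t
        = c * ∑ t ∈ Icc 1 m, c ^ (m - t) * e t + e (m + 1) := by
      rw [sum_Icc_succ_top (by omega), mul_sum, Nat.sub_self, pow_zero, one_mul]
      congr 1
      refine sum_congr rfl fun t ht => ?_
      rw [Nat.sub_add_comm (mem_Icc.mp ht).2, pow_succ]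
      ring
    rw [hsum, pow_succ]
    simp only [Nat.add_sub_cancel] at hstep
    nlinarith [mul_le_mul_of_nonneg_left ih hc]

theorem stmt_4_general
    {V : Type*} [DecidableEq V]
    (f : Finset V → ℝ)
    (hmono : ∀ A B : Finset V, A ⊆ B → f A ≤ f B)
    (hsub : ∀ A B : Finset V, A ⊆ B → ∀ v : V, v ∉ B →
      f (insert v B) - f B ≤ f (insert v A) - f A)
    (hnorm : f ∅ = 0)
    (K : ℕ) (hK : 1 ≤ K)
    (Vopt : Finset V) (hopt : Vopt.card ≤ K)
    (u : ℕ → V) (Vt : ℕ → Finset V)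
    (hV0 : Vt 0 = ∅)
    (hVstep : ∀ t ∈ Finset.Icc 1 K, Vt t = insert (u t) (Vt (t - 1)))
    (G L : ℕ → V → ℝ) (ε : ℕ → ℝ) (η lam : ℝ)
    (hLnn : ∀ t ∈ Finset.Icc 1 K, ∀ v : V, 0 ≤ L t v)
    (hεnn : ∀ t ∈ Finset.Icc 1 K, 0 ≤ ε t)
    (hηnn : 0 ≤ η)
    (hproxy : ∀ t ∈ Finset.Icc 1 K, ∀ v : V,
      |G t v - (f (insert v (Vt (t - 1))) - f (Vt (t - 1)))| ≤ ε t + η * L t v)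
    (hlam : η ≤ lam)
    (hgreedy : ∀ t ∈ Finset.Icc 1 K, ∀ v : V,
      G t v - lam * L t v ≤ G t (u t) - lam * L t (u t))
    (vstar : ℕ → V)
    (hstar : ∀ t ∈ Finset.Icc 1 K, ∀ v : V,
      f (insert v (Vt (t - 1))) - f (Vt (t - 1)) ≤
        f (insert (vstar t) (Vt (t - 1))) - f (Vt (t - 1))) :
    f (Vt K) ≥ (1 - (Real.exp 1)⁻¹) * f Vopt
      - ∑ t ∈ Finset.Icc 1 K,
          (1 - 1 / (K : ℝ)) ^ (K - t) * (2 * ε t + 2 * lam * L t (vstar t)) ∧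
    ∑ t ∈ Finset.Icc 1 K,
        (1 - 1 / (K : ℝ)) ^ (K - t) * (2 * ε t + 2 * lam * L t (vstar t)) ≤
      ∑ t ∈ Finset.Icc 1 K, (2 * ε t + 2 * lam * L t (vstar t)) := by
  have hmono' : Monotone f := fun A B h => hmono A B h
  set c : ℝ := 1 - 1 / (K : ℝ)
  have hc0 : 0 ≤ c := sub_nonneg.mpr (div_le_one_of_le₀ (by exact_mod_cast hK) K.cast_nonneg)
  have hc1 : c ≤ 1 := sub_le_self _ (by positivity)
  have hgap : ∀ t ∈ Icc 1 K, f Vopt - f (Vt t)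
      ≤ c * (f Vopt - f (Vt (t - 1))) + (2 * ε t + 2 * lam * L t (vstar t)) := fun t ht => by
    rw [hVstep t ht]
    exact sub_insert_le_one_sub_inv_mul_add hmono' hsub hK hopt (hstar t ht) <|
      sub_le_of_abs_sub_le_of_penalized_le (hproxy t ht (u t)) (hproxy t ht (vstar t))
        (hgreedy t ht (vstar t)) hlam (hLnn t ht (u t)) (hLnn t ht (vstar t))
  have hunrolled := le_pow_mul_add_sum_of_le_mul_add (a := fun t => f Vopt - f (Vt t)) hc0 hgap
  have hcK : c ^ K ≤ (Real.exp 1)⁻¹ := by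
    simpa [c, Real.exp_neg] using
      Real.one_sub_div_pow_le_exp_neg (n := K) (t := 1) (by exact_mod_cast hK)
  have hopt0 : 0 ≤ f Vopt := hnorm ▸ hmono' (empty_subset Vopt)
  refine ⟨?_, sum_le_sum fun t ht => mul_le_of_le_one_left ?_ (pow_le_one₀ hc0 hc1)⟩
  · simp only [hV0, hnorm, sub_zero] at hunrolled
    nlinarith [mul_le_mul_of_nonneg_right hcK hopt0]
  · have := hεnn t ht
    have := mul_nonneg (hηnn.trans hlam) (hLnn t ht (vstar t))
    linarith

/-- Tighter telescoped form of Lemma 1: under the stated noisy-oracle and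
conflict-aware greedy assumptions, the set `V_K` produced after `K` greedy
steps satisfies
`f(V_K) ≥ (1 − 1/e) · f(V*) − Σ_{t=1}^{K} (1 − 1/K)^{K−t} · (2·ε_t + 2·λ·γ_t)`;
moreover the discounted error sum is at most the undiscounted sum
`Σ_{t=1}^{K} (2·ε_t + 2·λ·γ_t)`. -/
theorem stmt_4
    {V : Type*} [Fintype V] [DecidableEq V]
    (f : Finset V → ℝ)
    (hmono : ∀ A B : Finset V, A ⊆ B → f A ≤ f B)
    (hsub : ∀ A B : Finset V, A ⊆ B → ∀ v : V, v ∉ B →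
      f (insert v B) - f B ≤ f (insert v A) - f A)
    (hnorm : f ∅ = 0)
    (K : ℕ) (hK : 1 ≤ K)
    (Vopt : Finset V) (hopt : Vopt.card ≤ K)
    (u : ℕ → V) (Vt : ℕ → Finset V)
    (hV0 : Vt 0 = ∅)
    (hVstep : ∀ t ∈ Finset.Icc 1 K, Vt t = insert (u t) (Vt (t - 1)))
    (G L : ℕ → V → ℝ) (ε : ℕ → ℝ) (η lam : ℝ)
    (hLnn : ∀ t ∈ Finset.Icc 1 K, ∀ v : V, 0 ≤ L t v)
    (hεnn : ∀ t ∈ Finset.Icc 1 K, 0 ≤ ε t)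
    (hηnn : 0 ≤ η)
    (hproxy : ∀ t ∈ Finset.Icc 1 K, ∀ v : V,
      |G t v - (f (insert v (Vt (t - 1))) - f (Vt (t - 1)))| ≤ ε t + η * L t v)
    (hlam : η ≤ lam)
    (hgreedy : ∀ t ∈ Finset.Icc 1 K, ∀ v : V,
      G t v - lam * L t v ≤ G t (u t) - lam * L t (u t))
    (vstar : ℕ → V)
    (hstar : ∀ t ∈ Finset.Icc 1 K, ∀ v : V,
      f (insert v (Vt (t - 1))) - f (Vt (t - 1)) ≤
        f (insert (vstar t) (Vt (t - 1))) - f (Vt (t - 1))) :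
    f (Vt K) ≥ (1 - (Real.exp 1)⁻¹) * f Vopt
      - ∑ t ∈ Finset.Icc 1 K,
          (1 - 1 / (K : ℝ)) ^ (K - t) * (2 * ε t + 2 * lam * L t (vstar t)) ∧
    ∑ t ∈ Finset.Icc 1 K,
        (1 - 1 / (K : ℝ)) ^ (K - t) * (2 * ε t + 2 * lam * L t (vstar t)) ≤
      ∑ t ∈ Finset.Icc 1 K, (2 * ε t + 2 * lam * L t (vstar t)) :=
  stmt_4_general f hmono hsub hnorm K hK Vopt hopt u Vt hV0 hVstep G L ε η lam hLnn hεnn hηnn hproxy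
    hlam hgreedy vstar hstar
end
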